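/- arXiv:2101.03053 — 2 statements merged into one kernel-verified Lean document; each statement's English description precedes it below -/
import Mathlib

section
/- Suppose a vector v satisfies Πᵀv = v and Π(α²M + αD + K)Πᵀv = ΠFb. Then there exists a vector Λ ∈ ℝ^{n₂} such that (α²M + αD + K)v + GᵀΛ = Fb and Gv = 0. -/
/-!
Write `Π = 1 - Gᵀ X` with `X = (G M⁻¹ Gᵀ)⁻¹ G M⁻¹`, so that `X Gᵀ = 1`. Then `Πᵀ v = v` says
`Xᵀ G v = 0`, and applying `G` gives `G v = G Xᵀ G v = 0`. With `Πᵀ v = v` the projected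
equation becomes `Π r = 0` for the residual `r = (α²M + αD + K) v - F b`, i.e. `r = Gᵀ (X r)`, so
`Λ = -X r` is a Lagrange multiplier.
-/

open Matrix

variable {R m n : Type*} [CommRing R] [Fintype m] [Fintype n] [DecidableEq n]

theorem eq_transpose_mulVec_of_one_sub_mul_mulVec_eq_zero (G X : Matrix m n R) {w : n → R}
    (h : (1 - Gᵀ * X) *ᵥ w = 0) : w = Gᵀ *ᵥ (X *ᵥ w) := by
  rwa [sub_mulVec, one_mulVec, ← mulVec_mulVec, sub_eq_zero] at h

theorem mulVec_eq_zero_of_one_sub_mul_transpose_mulVec_eq_self [DecidableEq m] {G X : Matrix m n R}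
    (hX : X * Gᵀ = 1) {v : n → R} (h : (1 - Gᵀ * X)ᵀ *ᵥ v = v) : G *ᵥ v = 0 := by
  have hXt : Xᵀ *ᵥ (G *ᵥ v) = 0 := by
    rwa [transpose_sub, transpose_one, transpose_mul, transpose_transpose, sub_mulVec,
      one_mulVec, sub_eq_self, ← mulVec_mulVec] at h
  have hGX : G * Xᵀ = 1 := by
    simpa only [transpose_mul, transpose_transpose, transpose_one] using congrArg transpose hX
  calc G *ᵥ v = (G * Xᵀ) *ᵥ (G *ᵥ v) := by rw [hGX, one_mulVec]
    _ = 0 := by rw [← mulVec_mulVec, hXt, mulVec_zero]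

theorem inv_mul_mul_inv_mul_transpose_eq_one [DecidableEq m] (G : Matrix m n R)
    (M : Matrix n n R) (hG : IsUnit (G * M⁻¹ * Gᵀ).det) :
    (G * M⁻¹ * Gᵀ)⁻¹ * G * M⁻¹ * Gᵀ = 1 := by
  simpa only [Matrix.mul_assoc] using nonsing_inv_mul _ hG

theorem projected_implies_saddle_point_general
    {n1 n2 m : ℕ} (M D K : Matrix (Fin n1) (Fin n1) ℝ) (G : Matrix (Fin n2) (Fin n1) ℝ)
    (F : Matrix (Fin n1) (Fin m) ℝ) (b : Fin m → ℝ) (α : ℝ)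
    (hG : IsUnit (G * M⁻¹ * Gᵀ).det)
    (P : Matrix (Fin n1) (Fin n1) ℝ)
    (hP : P = 1 - Gᵀ * (G * M⁻¹ * Gᵀ)⁻¹ * G * M⁻¹)
    (v : Fin n1 → ℝ)
    (h1 : Pᵀ.mulVec v = v)
    (h2 : (P * (α ^ 2 • M + α • D + K) * Pᵀ).mulVec v = (P * F).mulVec b) :
    ∃ Λ : Fin n2 → ℝ,
      (α ^ 2 • M + α • D + K).mulVec v + Gᵀ.mulVec Λ = F.mulVec b ∧ G.mulVec v = 0 := by
  set A := α ^ 2 • M + α • D + K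
  set X := (G * M⁻¹ * Gᵀ)⁻¹ * G * M⁻¹
  have hXG : X * Gᵀ = 1 := inv_mul_mul_inv_mul_transpose_eq_one G M hG
  have hPX : P = 1 - Gᵀ * X := by simp only [hP, X, Matrix.mul_assoc]
  have hres : P *ᵥ (A *ᵥ v - F *ᵥ b) = 0 := by
    rwa [← mulVec_mulVec, h1, ← mulVec_mulVec, ← mulVec_mulVec, ← sub_eq_zero,
      ← mulVec_sub] at h2
  rw [hPX] at hres h1
  have hr := eq_transpose_mulVec_of_one_sub_mul_mulVec_eq_zero G X hres
  refine ⟨-(X *ᵥ (A *ᵥ v - F *ᵥ b)), ?_,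
    mulVec_eq_zero_of_one_sub_mul_transpose_mulVec_eq_self hXG h1⟩
  rw [mulVec_neg, ← hr]
  abel

theorem projected_implies_saddle_point
    {n1 n2 m : ℕ} (M D K : Matrix (Fin n1) (Fin n1) ℝ) (G : Matrix (Fin n2) (Fin n1) ℝ)
    (F : Matrix (Fin n1) (Fin m) ℝ) (b : Fin m → ℝ) (α : ℝ)
    (hM : IsUnit M.det) (hG : IsUnit (G * M⁻¹ * Gᵀ).det)
    (P : Matrix (Fin n1) (Fin n1) ℝ)
    (hP : P = 1 - Gᵀ * (G * M⁻¹ * Gᵀ)⁻¹ * G * M⁻¹)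
    (v : Fin n1 → ℝ)
    (h1 : Pᵀ.mulVec v = v)
    (h2 : (P * (α ^ 2 • M + α • D + K) * Pᵀ).mulVec v = (P * F).mulVec b) :
    ∃ Λ : Fin n2 → ℝ,
      (α ^ 2 • M + α • D + K).mulVec v + Gᵀ.mulVec Λ = F.mulVec b ∧ G.mulVec v = 0 :=
  projected_implies_saddle_point_general M D K G F b α hG P hP v h1 h2
end

section
/- A vector pair (v, Λ) satisfies the saddle-point system (α²M + αD + K)v + GᵀΛ = Fb and Gv = 0 if and only if v satisfies Πᵀv = v and Π(α²M + αD + K)Πᵀv = ΠFb. Moreover, in that case, Λ is uniquely determined by v. -/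
/-!
Write `S = G M⁻¹ Gᵀ` and `Π = 1 - Gᵀ S⁻¹ G M⁻¹`. Invertibility of `S` gives `Π Gᵀ = 0`,
hence `G Πᵀ = 0`, and it makes `Gᵀ` injective. Since `1 - Πᵀ` factors through `G`, the
constraint `G v = 0` is equivalent to `Πᵀ v = v`. Applying `Π` to the first equation kills
the multiplier term and gives the projected equation; conversely, the projected equation says
that the residual `r = F b - A v` satisfies `Π r = 0`, i.e. `r = (1 - Π) r = Gᵀ (S⁻¹ G M⁻¹ r)`,
which exhibits a multiplier. Injectivity of `Gᵀ` makes it unique.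
-/

open Matrix

namespace Matrix

variable {R : Type*} [CommRing R] {m n : Type*} [Fintype m] [Fintype n] [DecidableEq m]
  [DecidableEq n]

noncomputable def constraintProjector (M : Matrix n n R) (G : Matrix m n R) : Matrix n n R :=
  1 - Gᵀ * (G * M⁻¹ * Gᵀ)⁻¹ * G * M⁻¹

variable {M : Matrix n n R} {G : Matrix m n R}

lemma constraintProjector_eq_one_sub (M : Matrix n n R) (G : Matrix m n R) :
    constraintProjector M G = 1 - Gᵀ * ((G * M⁻¹ * Gᵀ)⁻¹ * G * M⁻¹) := by
  simp only [constraintProjector, Matrix.mul_assoc]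

lemma constraintProjector_mul_transpose (hS : IsUnit (G * M⁻¹ * Gᵀ).det) :
    constraintProjector M G * Gᵀ = 0 := by
  have hSS : (G * M⁻¹ * Gᵀ)⁻¹ * (G * M⁻¹ * Gᵀ) = 1 := nonsing_inv_mul _ hS
  rw [constraintProjector_eq_one_sub, Matrix.sub_mul, Matrix.one_mul, Matrix.mul_assoc,
    show (G * M⁻¹ * Gᵀ)⁻¹ * G * M⁻¹ * Gᵀ = (G * M⁻¹ * Gᵀ)⁻¹ * (G * M⁻¹ * Gᵀ) by
      simp only [Matrix.mul_assoc], hSS, Matrix.mul_one, sub_self]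

lemma mul_transpose_constraintProjector (hS : IsUnit (G * M⁻¹ * Gᵀ).det) :
    G * (constraintProjector M G)ᵀ = 0 := by
  simpa using congrArg transpose (constraintProjector_mul_transpose hS)

lemma transpose_constraintProjector_mulVec_of_mulVec_eq_zero {v : n → R} (hv : G *ᵥ v = 0) :
    (constraintProjector M G)ᵀ *ᵥ v = v := by
  rw [constraintProjector_eq_one_sub, transpose_sub, transpose_one, transpose_mul, sub_mulVec,
    one_mulVec, ← mulVec_mulVec, transpose_transpose, hv, mulVec_zero, sub_zero]

lemma transpose_constraintProjector_mulVec_eq_self_iff (hS : IsUnit (G * M⁻¹ * Gᵀ).det)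
    (v : n → R) : (constraintProjector M G)ᵀ *ᵥ v = v ↔ G *ᵥ v = 0 := by
  refine ⟨fun hv => ?_, transpose_constraintProjector_mulVec_of_mulVec_eq_zero⟩
  rw [← hv, mulVec_mulVec, mul_transpose_constraintProjector hS, zero_mulVec]

lemma transpose_mulVec_injective_of_isUnit_det (hS : IsUnit (G * M⁻¹ * Gᵀ).det) :
    Function.Injective (Gᵀ *ᵥ ·) := by
  have hSinj := mulVec_injective_of_isUnit ((isUnit_iff_isUnit_det _).2 hS)
  refine Function.Injective.of_comp (f := ((G * M⁻¹) *ᵥ ·)) ?_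
  simpa only [Function.comp_def, mulVec_mulVec] using hSinj

theorem exists_saddle_point_iff_projected (hS : IsUnit (G * M⁻¹ * Gᵀ).det)
    (A : Matrix n n R) (f v : n → R) :
    (∃ Λ : m → R, A *ᵥ v + Gᵀ *ᵥ Λ = f ∧ G *ᵥ v = 0) ↔
      (constraintProjector M G)ᵀ *ᵥ v = v ∧
        (constraintProjector M G * A * (constraintProjector M G)ᵀ) *ᵥ v =
          constraintProjector M G *ᵥ f := by
  set P := constraintProjector M G with hP
  rw [transpose_constraintProjector_mulVec_eq_self_iff hS]
  constructor
  · rintro ⟨Λ, hsaddle, hGv⟩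
    refine ⟨hGv, ?_⟩
    rw [← mulVec_mulVec, transpose_constraintProjector_mulVec_of_mulVec_eq_zero hGv,
      ← mulVec_mulVec, ← hsaddle, mulVec_add, mulVec_mulVec _ P Gᵀ,
      constraintProjector_mul_transpose hS, zero_mulVec, add_zero]
  · rintro ⟨hGv, hproj⟩
    have hresidual : P *ᵥ (f - A *ᵥ v) = 0 := by
      rw [mulVec_sub, mulVec_mulVec, ← hproj, ← mulVec_mulVec _ (P * A),
        transpose_constraintProjector_mulVec_of_mulVec_eq_zero hGv, sub_self]
    refine ⟨((G * M⁻¹ * Gᵀ)⁻¹ * G * M⁻¹) *ᵥ (f - A *ᵥ v), ?_, hGv⟩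
    have hcomplement : Gᵀ * ((G * M⁻¹ * Gᵀ)⁻¹ * G * M⁻¹) = 1 - P := by
      rw [hP, constraintProjector_eq_one_sub, sub_sub_cancel]
    rw [mulVec_mulVec, hcomplement, sub_mulVec, one_mulVec, hresidual, sub_zero,
      add_sub_cancel]

theorem saddle_point_multiplier_unique (hS : IsUnit (G * M⁻¹ * Gᵀ).det) {A : Matrix n n R}
    {f v : n → R} {Λ Λ' : m → R} (h : A *ᵥ v + Gᵀ *ᵥ Λ = f) (h' : A *ᵥ v + Gᵀ *ᵥ Λ' = f) :
    Λ = Λ' :=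
  transpose_mulVec_injective_of_isUnit_det hS (add_left_cancel (h.trans h'.symm))

end Matrix

theorem saddle_point_iff_projected_and_unique_multiplier_general
    {n1 n2 m : ℕ} (M D K : Matrix (Fin n1) (Fin n1) ℝ) (G : Matrix (Fin n2) (Fin n1) ℝ)
    (F : Matrix (Fin n1) (Fin m) ℝ) (b : Fin m → ℝ) (α : ℝ)
    (hG : IsUnit (G * M⁻¹ * Gᵀ).det)
    (P : Matrix (Fin n1) (Fin n1) ℝ)
    (hP : P = 1 - Gᵀ * (G * M⁻¹ * Gᵀ)⁻¹ * G * M⁻¹)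
    (v : Fin n1 → ℝ) :
    ((∃ Λ : Fin n2 → ℝ,
        (α ^ 2 • M + α • D + K).mulVec v + Gᵀ.mulVec Λ = F.mulVec b ∧ G.mulVec v = 0) ↔
      (Pᵀ.mulVec v = v ∧
        (P * (α ^ 2 • M + α • D + K) * Pᵀ).mulVec v = (P * F).mulVec b)) ∧
    (∀ Λ Λ' : Fin n2 → ℝ,
      ((α ^ 2 • M + α • D + K).mulVec v + Gᵀ.mulVec Λ = F.mulVec b ∧ G.mulVec v = 0) →
      ((α ^ 2 • M + α • D + K).mulVec v + Gᵀ.mulVec Λ' = F.mulVec b ∧ G.mulVec v = 0) →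
      Λ = Λ') := by
  obtain rfl : P = constraintProjector M G := hP
  rw [← mulVec_mulVec b]
  exact ⟨exists_saddle_point_iff_projected hG _ _ v,
    fun _ _ h h' => saddle_point_multiplier_unique hG h.1 h'.1⟩

theorem saddle_point_iff_projected_and_unique_multiplier
    {n1 n2 m : ℕ} (M D K : Matrix (Fin n1) (Fin n1) ℝ) (G : Matrix (Fin n2) (Fin n1) ℝ)
    (F : Matrix (Fin n1) (Fin m) ℝ) (b : Fin m → ℝ) (α : ℝ)
    (hM : IsUnit M.det) (hG : IsUnit (G * M⁻¹ * Gᵀ).det) (hGG : IsUnit (G * Gᵀ).det)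
    (P : Matrix (Fin n1) (Fin n1) ℝ)
    (hP : P = 1 - Gᵀ * (G * M⁻¹ * Gᵀ)⁻¹ * G * M⁻¹)
    (v : Fin n1 → ℝ) :
    ((∃ Λ : Fin n2 → ℝ,
        (α ^ 2 • M + α • D + K).mulVec v + Gᵀ.mulVec Λ = F.mulVec b ∧ G.mulVec v = 0) ↔
      (Pᵀ.mulVec v = v ∧
        (P * (α ^ 2 • M + α • D + K) * Pᵀ).mulVec v = (P * F).mulVec b)) ∧
    (∀ Λ Λ' : Fin n2 → ℝ,
      ((α ^ 2 • M + α • D + K).mulVec v + Gᵀ.mulVec Λ = F.mulVec b ∧ G.mulVec v = 0) →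
      ((α ^ 2 • M + α • D + K).mulVec v + Gᵀ.mulVec Λ' = F.mulVec b ∧ G.mulVec v = 0) →
      Λ = Λ') :=
  saddle_point_iff_projected_and_unique_multiplier_general M D K G F b α hG P hP v
end
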